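/- Let D₁, ..., Dₘ be n×n diagonal matrices with nonnegative diagonal entries such that every diagonal entry of D₁D₂⋯Dₘ is ≥ 1. Then for every entrywise nonnegative n×n real matrix A, w(A)^m ≤ w(D₁A)·w(D₂A) ⋯ w(DₘA), where w denotes the numerical radius (over ℂⁿ). -/

import Mathlib

/-
Write `t (j, k) = x j * A j k * x k` with `x = |z|` for a unit vector `z`; then `|⟨Az, z⟩| ≤ ∑ t`,
and `∑ c i j * t (j, k)` is the quadratic form of `Dᵢ A` at the unit vector `x`, hence at most
`w(Dᵢ A)`. Since `∏ᵢ c i j ≥ 1`, the weighted Hölder inequality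
`(∑ t)^m ≤ ∏ᵢ ∑ c i j * t (j, k)`, a consequence of AM-GM, finishes the proof.
-/

open scoped Matrix

/-- The numerical radius of an `n × n` complex matrix, viewed as an operator on `ℂⁿ`
with the Euclidean norm. -/
noncomputable def matNumRad {n : ℕ} (M : Matrix (Fin n) (Fin n) ℂ) : ℝ :=
  sSup {r : ℝ | ∃ x : EuclideanSpace ℂ (Fin n), ‖x‖ = 1 ∧
    r = ‖(inner ℂ (Matrix.toEuclideanCLM (𝕜 := ℂ) M x) x : ℂ)‖}

open Finset Matrix
open scoped InnerProductSpace

theorem prod_le_sum_div_card_pow {ι : Type*} (s : Finset ι) (z : ι → ℝ) (hz : ∀ i ∈ s, 0 ≤ z i) :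
    ∏ i ∈ s, z i ≤ ((∑ i ∈ s, z i) / #s) ^ #s := by
  rcases s.eq_empty_or_nonempty with rfl | hs
  · simp
  have hk : #s ≠ 0 := hs.card_pos.ne'
  have amgm := Real.geom_mean_le_arith_mean_weighted s (fun _ => ((#s : ℝ))⁻¹) z
    (fun _ _ => by positivity) (by simp [hk]) hz
  calc ∏ i ∈ s, z i = (∏ i ∈ s, z i ^ ((#s : ℝ)⁻¹)) ^ #s := by
        rw [← prod_pow]
        exact prod_congr rfl fun i hi => (Real.rpow_inv_natCast_pow (hz i hi) hk).symm
    _ ≤ (∑ i ∈ s, (#s : ℝ)⁻¹ * z i) ^ #s :=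
        pow_le_pow_left₀ (prod_nonneg fun i hi => Real.rpow_nonneg (hz i hi) _) amgm _
    _ = ((∑ i ∈ s, z i) / #s) ^ #s := by rw [← mul_sum, inv_mul_eq_div]

theorem sum_pow_card_le_prod_sum_mul {ι κ : Type*} [Fintype ι] (s : Finset κ) (a : ι → κ → ℝ)
    (t : κ → ℝ) (ha : ∀ i, ∀ p ∈ s, 0 ≤ a i p) (ht : ∀ p ∈ s, 0 ≤ t p)
    (hprod : ∀ p ∈ s, 1 ≤ ∏ i, a i p) :
    (∑ p ∈ s, t p) ^ Fintype.card ι ≤ ∏ i, ∑ p ∈ s, a i p * t p := by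
  cases isEmpty_or_nonempty ι
  · simp
  set k := Fintype.card ι
  have hk : k ≠ 0 := Fintype.card_ne_zero
  set S : ι → ℝ := fun i => ∑ p ∈ s, a i p * t p
  have hS : ∀ i, 0 ≤ S i := fun i => sum_nonneg fun p hp => mul_nonneg (ha i p hp) (ht p hp)
  by_cases hzero : ∃ i, S i = 0
  · obtain ⟨i, hi⟩ := hzero
    have ht0 : ∀ p ∈ s, t p = 0 := by
      intro p hp
      have hai : a i p ≠ 0 := fun h =>
        (zero_lt_one.trans_le (hprod p hp)).ne' (prod_eq_zero (mem_univ i) h)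
      exact (mul_eq_zero.1 ((sum_eq_zero_iff_of_nonneg fun q hq =>
        mul_nonneg (ha i q hq) (ht q hq)).1 hi p hp)).resolve_left hai
    rw [sum_eq_zero ht0, zero_pow hk]
    exact prod_nonneg fun i _ => hS i
  push Not at hzero
  have hSpos : ∀ i, 0 < S i := fun i => (hS i).lt_of_ne' (hzero i)
  set r := (∏ i, S i) ^ (k⁻¹ : ℝ)
  have hr : 0 < r := Real.rpow_pos_of_pos (prod_pos fun i _ => hSpos i) _
  have hrk : r ^ k = ∏ i, S i := Real.rpow_inv_natCast_pow (prod_nonneg fun i _ => hS i) hk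
  -- AM-GM on the normalized terms `a i p * t p / S i`, whose sum over `p` is `1` for each `i`
  have hpt : ∀ p ∈ s, t p / r ≤ (∑ i, a i p * t p / S i) / k := by
    intro p hp
    refine (pow_le_pow_iff_left₀ (div_nonneg (ht p hp) hr.le) ?_ hk).1 ?_
    · exact div_nonneg (sum_nonneg fun i _ =>
        div_nonneg (mul_nonneg (ha i p hp) (ht p hp)) (hS i)) (Nat.cast_nonneg _)
    calc (t p / r) ^ k = t p ^ k / ∏ i, S i := by rw [div_pow, hrk]
      _ ≤ (∏ i, a i p) * t p ^ k / ∏ i, S i := by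
          refine div_le_div_of_nonneg_right ?_ (prod_nonneg fun i _ => hS i)
          exact le_mul_of_one_le_left (pow_nonneg (ht p hp) k) (hprod p hp)
      _ = ∏ i, a i p * t p / S i := by
          rw [prod_div_distrib, prod_mul_distrib, prod_const, card_univ]
      _ ≤ ((∑ i, a i p * t p / S i) / k) ^ k := by
          simpa using prod_le_sum_div_card_pow univ (fun i => a i p * t p / S i)
            fun i _ => div_nonneg (mul_nonneg (ha i p hp) (ht p hp)) (hS i)
  have hsum : ∑ p ∈ s, t p ≤ r := by
    calc ∑ p ∈ s, t p = r * ∑ p ∈ s, t p / r := by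
          rw [mul_sum]; exact sum_congr rfl fun p _ => by field_simp
      _ ≤ r * ∑ p ∈ s, (∑ i, a i p * t p / S i) / k :=
          mul_le_mul_of_nonneg_left (sum_le_sum hpt) hr.le
      _ = r := by
          rw [← sum_div, sum_comm]
          simp_rw [← sum_div]
          simp [S, div_self (hSpos _).ne', k, Fintype.card_ne_zero]
  calc (∑ p ∈ s, t p) ^ k ≤ r ^ k := by gcongr; exact sum_nonneg ht
    _ = ∏ i, S i := hrk

theorem dotProduct_mulVec_pow_card_le_prod_diagonal_mul {ι κ μ : Type*} [Fintype ι] [Fintype κ]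
    [DecidableEq κ] [Fintype μ] (c : ι → κ → ℝ) (hc : ∀ i j, 0 ≤ c i j)
    (hprod : ∀ j, 1 ≤ ∏ i, c i j)
    (A : Matrix κ μ ℝ) (hA : ∀ j k, 0 ≤ A j k) {x : κ → ℝ} {y : μ → ℝ} (hx : 0 ≤ x) (hy : 0 ≤ y) :
    (x ⬝ᵥ A *ᵥ y) ^ Fintype.card ι ≤ ∏ i, x ⬝ᵥ (diagonal (c i) * A) *ᵥ y := by
  have hsum : ∀ d : κ → ℝ,
      x ⬝ᵥ (diagonal d * A) *ᵥ y = ∑ p : κ × μ, d p.1 * (x p.1 * A p.1 p.2 * y p.2) := by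
    intro d
    simp only [dotProduct, mulVec, diagonal_mul, Fintype.sum_prod_type, mul_sum]
    exact sum_congr rfl fun j _ => sum_congr rfl fun k _ => by ring
  have hsum_one : x ⬝ᵥ A *ᵥ y = ∑ p : κ × μ, x p.1 * A p.1 p.2 * y p.2 := by
    simpa using hsum 1
  rw [hsum_one]
  simp_rw [hsum]
  exact sum_pow_card_le_prod_sum_mul univ (fun i (p : κ × μ) => c i p.1) _
    (fun i p _ => hc i p.1)
    (fun (p : κ × μ) _ => mul_nonneg (mul_nonneg (hx p.1) (hA p.1 p.2)) (hy p.2))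
    fun p _ => hprod p.1

lemma norm_inner_toEuclideanCLM_le {ι : Type*} [Fintype ι] [DecidableEq ι] (M : Matrix ι ι ℂ)
    (z : EuclideanSpace ℂ ι) :
    ‖⟪toEuclideanCLM (𝕜 := ℂ) M z, z⟫_ℂ‖ ≤ (‖z ·‖) ⬝ᵥ M.map (‖·‖) *ᵥ (‖z ·‖) := by
  rw [EuclideanSpace.inner_eq_star_dotProduct, ofLp_toEuclideanCLM]
  calc ‖z ⬝ᵥ star (M *ᵥ z)‖ ≤ ∑ j, ‖z j‖ * ‖(M *ᵥ z) j‖ := by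
        refine (norm_sum_le _ _).trans_eq ?_
        simp
    _ ≤ ∑ j, ‖z j‖ * ∑ k, ‖M j k‖ * ‖z k‖ := by
        gcongr with j
        exact (norm_sum_le _ _).trans_eq (by simp)
    _ = _ := by simp [dotProduct, mulVec]

section NumericalRadius

variable {n : ℕ}

lemma matNumRad_nonneg (M : Matrix (Fin n) (Fin n) ℂ) : 0 ≤ matNumRad M :=
  Real.sSup_nonneg fun _ ⟨_, _, hr⟩ => hr ▸ norm_nonneg _

lemma norm_inner_le_matNumRad (M : Matrix (Fin n) (Fin n) ℂ) {z : EuclideanSpace ℂ (Fin n)}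
    (hz : ‖z‖ = 1) : ‖⟪toEuclideanCLM (𝕜 := ℂ) M z, z⟫_ℂ‖ ≤ matNumRad M := by
  refine le_csSup ⟨‖toEuclideanCLM (𝕜 := ℂ) M‖, ?_⟩ ⟨z, hz, rfl⟩
  rintro _ ⟨x, hx, rfl⟩
  calc ‖⟪toEuclideanCLM (𝕜 := ℂ) M x, x⟫_ℂ‖ ≤ ‖toEuclideanCLM (𝕜 := ℂ) M x‖ * ‖x‖ :=
        norm_inner_le_norm _ _
    _ ≤ ‖toEuclideanCLM (𝕜 := ℂ) M‖ := by
        simpa [hx] using (toEuclideanCLM (𝕜 := ℂ) M).le_opNorm x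

lemma matNumRad_pow_le_of_forall {M : Matrix (Fin n) (Fin n) ℂ} {m : ℕ} (hm : m ≠ 0) {r : ℝ}
    (hr : 0 ≤ r)
    (h : ∀ z : EuclideanSpace ℂ (Fin n), ‖z‖ = 1 → ‖⟪toEuclideanCLM (𝕜 := ℂ) M z, z⟫_ℂ‖ ^ m ≤ r) :
    matNumRad M ^ m ≤ r := by
  have hroot : 0 ≤ r ^ (m⁻¹ : ℝ) := Real.rpow_nonneg hr _
  calc matNumRad M ^ m ≤ (r ^ (m⁻¹ : ℝ)) ^ m := by
        refine pow_le_pow_left₀ (matNumRad_nonneg M) (Real.sSup_le ?_ hroot) m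
        rintro _ ⟨z, hz, rfl⟩
        rw [← pow_le_pow_iff_left₀ (norm_nonneg _) hroot hm, Real.rpow_inv_natCast_pow hr hm]
        exact h z hz
    _ = r := Real.rpow_inv_natCast_pow hr hm

lemma abs_dotProduct_mulVec_le_matNumRad (B : Matrix (Fin n) (Fin n) ℝ) {x : Fin n → ℝ}
    (hx : x ⬝ᵥ x = 1) : |x ⬝ᵥ B *ᵥ x| ≤ matNumRad (B.map (fun a => (a : ℂ))) := by
  set z : EuclideanSpace ℂ (Fin n) := WithLp.toLp 2 (fun j => (x j : ℂ))
  have hz : ‖z‖ = 1 := by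
    rw [← pow_eq_one_iff_of_nonneg (norm_nonneg z) two_ne_zero, EuclideanSpace.norm_sq_eq, ← hx]
    simp [z, dotProduct, sq]
  have hinner : ⟪toEuclideanCLM (𝕜 := ℂ) (B.map (fun a => (a : ℂ))) z, z⟫_ℂ =
      ((x ⬝ᵥ B *ᵥ x : ℝ) : ℂ) := by
    simp [z, EuclideanSpace.inner_eq_star_dotProduct, dotProduct, mulVec]
  simpa [hinner] using norm_inner_le_matNumRad (B.map (fun a => (a : ℂ))) hz

end NumericalRadius

theorem matNumRad_pow_le_prod (n m : ℕ) (c : Fin m → Fin n → ℝ)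
    (hc : ∀ i j, 0 ≤ c i j) (hprod : ∀ j, 1 ≤ ∏ i, c i j)
    (A : Matrix (Fin n) (Fin n) ℝ) (hA : ∀ i j, 0 ≤ A i j) :
    matNumRad (A.map (fun a => (a : ℂ))) ^ m ≤
      ∏ i, matNumRad (Matrix.diagonal (fun j => (c i j : ℂ)) * A.map (fun a => (a : ℂ))) := by
  rcases eq_or_ne m 0 with rfl | hm
  · simp
  have hDA : ∀ i, diagonal (fun j => (c i j : ℂ)) * A.map (fun a => (a : ℂ)) =
      (diagonal (c i) * A).map (fun a => (a : ℂ)) := fun i => by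
    ext j k; simp [diagonal_mul]
  simp only [hDA]
  refine matNumRad_pow_le_of_forall hm (prod_nonneg fun i _ => matNumRad_nonneg _) fun z hz => ?_
  set x : Fin n → ℝ := (‖z ·‖)
  have hx : x ⬝ᵥ x = 1 := by
    simpa [x, dotProduct, ← sq, hz] using (EuclideanSpace.norm_sq_eq z).symm
  have hnorm : (A.map (fun a => (a : ℂ))).map (‖·‖) = A := by
    ext j k; simp [abs_of_nonneg (hA j k)]
  calc ‖⟪toEuclideanCLM (𝕜 := ℂ) (A.map (fun a => (a : ℂ))) z, z⟫_ℂ‖ ^ m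
      ≤ (x ⬝ᵥ A *ᵥ x) ^ m := by
        gcongr
        simpa only [hnorm] using norm_inner_toEuclideanCLM_le (A.map (fun a => (a : ℂ))) z
    _ ≤ ∏ i, x ⬝ᵥ (diagonal (c i) * A) *ᵥ x := by
        simpa using dotProduct_mulVec_pow_card_le_prod_diagonal_mul c hc hprod A hA
          (fun j => norm_nonneg (z j)) (fun j => norm_nonneg (z j))
    _ ≤ ∏ i, |x ⬝ᵥ (diagonal (c i) * A) *ᵥ x| := (le_abs_self _).trans_eq (abs_prod _ _)
    _ ≤ _ := prod_le_prod (fun i _ => abs_nonneg _) fun i _ =>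
        abs_dotProduct_mulVec_le_matNumRad _ hx
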